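/- Let G = (V, E) be a finite graph embedded in the plane such that for each edge e ∈ E there is a topological line ℓ_e ⊆ ℝ² (a closed subset separating the plane into two components) with: e is the unique edge of G intersecting ℓ_e, and the two endpoints of e lie in different components of ℝ² \ ℓ_e. Then every connected component of G is a tree (G contains no cycle). -/

import Mathlib

/-!
If a cycle runs through the edge `vw`, the rest of the cycle is a walk from `w` back to `v`
that avoids `vw`. The union of its arcs is connected, contains `pos v` and `pos w`, and misses
the separating line of `vw`, since that line meets no other edge. So it lies in the complement
of the line, whose two open sides separate `pos v` from `pos w`: a contradiction.
-/

namespace SimpleGraph.Walk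

variable {V X : Type*} {G : SimpleGraph V}
  (pos : V → X) (arc : Sym2 V → Set X)

theorem mem_insert_biUnion_arc
    (harc_mem : ∀ v w : V, G.Adj v w → pos v ∈ arc s(v, w) ∧ pos w ∈ arc s(v, w)) :
    ∀ {a b : V} (q : G.Walk a b), pos b ∈ insert (pos a) (⋃ e ∈ q.edges, arc e)
  | _, _, nil => Set.mem_insert _ _
  | a, _, cons (v := c) h q => by
    rcases mem_insert_biUnion_arc harc_mem q with hbc | hb
    · exact Set.mem_insert_of_mem _ (Set.mem_biUnion List.mem_cons_self (hbc ▸ (harc_mem a c h).2))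
    · simp only [edges_cons, List.mem_cons, Set.iUnion_iUnion_eq_or_left] at hb ⊢
      exact Or.inr (Or.inr hb)

theorem isPreconnected_insert_biUnion_arc [TopologicalSpace X]
    (harc_conn : ∀ e ∈ G.edgeSet, IsPreconnected (arc e))
    (harc_mem : ∀ v w : V, G.Adj v w → pos v ∈ arc s(v, w) ∧ pos w ∈ arc s(v, w)) :
    ∀ {a b : V} (q : G.Walk a b), IsPreconnected (insert (pos a) (⋃ e ∈ q.edges, arc e))
  | _, _, nil => by simpa using isPreconnected_singleton
  | a, _, cons (v := c) h q => by
    obtain ⟨ha, hc⟩ := harc_mem a c h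
    have hsplit : insert (pos a) (⋃ e ∈ (cons h q).edges, arc e)
        = arc s(a, c) ∪ insert (pos c) (⋃ e ∈ q.edges, arc e) := by
      simp only [edges_cons, List.mem_cons, Set.iUnion_iUnion_eq_or_left]
      rw [Set.insert_eq_of_mem (Set.mem_union_left _ ha), Set.union_insert,
        Set.insert_eq_of_mem (Set.mem_union_left _ hc)]
    rw [hsplit]
    exact (harc_conn _ h).union (pos c) hc (Set.mem_insert _ _)
      (isPreconnected_insert_biUnion_arc harc_conn harc_mem q)

end SimpleGraph.Walk

theorem stmt_13_general {V : Type*} (G : SimpleGraph V)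
    (pos : V → ℝ × ℝ) (arc : Sym2 V → Set (ℝ × ℝ))
    (harc_conn : ∀ e ∈ G.edgeSet, IsConnected (arc e))
    (harc_mem : ∀ v w : V, G.Adj v w → pos v ∈ arc s(v, w) ∧ pos w ∈ arc s(v, w))
    (ℓ : Sym2 V → Set (ℝ × ℝ))
    (hsep : ∀ v w : V, G.Adj v w →
      ∃ Lc Rc : Set (ℝ × ℝ), IsOpen Lc ∧ IsOpen Rc ∧ IsConnected Lc ∧
        IsConnected Rc ∧ Disjoint Lc Rc ∧ Lc ∪ Rc = (ℓ s(v, w))ᶜ ∧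
        pos v ∈ Lc ∧ pos w ∈ Rc)
    (hunique : ∀ e ∈ G.edgeSet, ∀ e' ∈ G.edgeSet, e' ≠ e →
      Disjoint (arc e') (ℓ e)) :
    G.IsAcyclic := by
  intro v p hcycle
  cases p with
  | nil => exact hcycle.ne_nil rfl
  | @cons _ w _ h q =>
    obtain ⟨Lc, Rc, hLc, hRc, -, -, hdisj, hcompl, hvL, hwR⟩ := hsep v w h
    have hvw : s(v, w) ∉ q.edges := ((SimpleGraph.Walk.isTrail_cons h q).mp hcycle.isTrail).2
    have hsub : insert (pos w) (⋃ e ∈ q.edges, arc e) ⊆ Lc ∪ Rc := by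
      refine Set.insert_subset (Or.inr hwR) (Set.iUnion₂_subset fun e he => hcompl ▸ ?_)
      exact Disjoint.subset_compl_right
        (hunique _ h _ (q.edges_subset_edgeSet he) (ne_of_mem_of_not_mem he hvw))
    have hconn := SimpleGraph.Walk.isPreconnected_insert_biUnion_arc pos arc
      (fun e he => (harc_conn e he).isPreconnected) harc_mem q
    have hinL := hconn.subset_left_of_subset_union hLc hRc hdisj hsub
      ⟨pos v, SimpleGraph.Walk.mem_insert_biUnion_arc pos arc harc_mem q, hvL⟩
    exact hdisj.le_bot ⟨hinL (Set.mem_insert _ _), hwR⟩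

/-- A finite graph embedded in the plane, each of whose edges admits a
separating topological line meeting no other edge and separating the edge's
endpoints, is a forest (acyclic). -/
theorem stmt_13 {V : Type*} [Finite V] (G : SimpleGraph V)
    (pos : V → ℝ × ℝ) (arc : Sym2 V → Set (ℝ × ℝ))
    (harc_conn : ∀ e ∈ G.edgeSet, IsConnected (arc e))
    (harc_mem : ∀ v w : V, G.Adj v w → pos v ∈ arc s(v, w) ∧ pos w ∈ arc s(v, w))
    (ℓ : Sym2 V → Set (ℝ × ℝ))
    (hclosed : ∀ e ∈ G.edgeSet, IsClosed (ℓ e))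
    (hsep : ∀ v w : V, G.Adj v w →
      ∃ Lc Rc : Set (ℝ × ℝ), IsOpen Lc ∧ IsOpen Rc ∧ IsConnected Lc ∧
        IsConnected Rc ∧ Disjoint Lc Rc ∧ Lc ∪ Rc = (ℓ s(v, w))ᶜ ∧
        pos v ∈ Lc ∧ pos w ∈ Rc)
    (hunique : ∀ e ∈ G.edgeSet, ∀ e' ∈ G.edgeSet, e' ≠ e →
      Disjoint (arc e') (ℓ e)) :
    G.IsAcyclic :=
  stmt_13_general G pos arc harc_conn harc_mem ℓ hsep hunique
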